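/- Vizing's theorem: every simple undirected graph with maximum degree Δ admits a proper edge coloring using at most Δ+1 colors. -/

import Mathlib

/-!
Edges are colored one at a time with colors from a type `α` with more than `Δ` elements, so that
every vertex misses some color. To color an uncolored edge `x y₀`, grow a fan `y₀, y₁, …, y_k` of
neighbors of `x` in which the color of `x y_(i+1)` is missing at `y_i`. If a color `b` missing at
`y_k` is also missing at `x`, rotating the fan (recoloring `x y_i` with the color of `x y_(i+1)` and
`x y_k` with `b`) colors `x y₀`. Otherwise `b` sits on an edge `x w`. If `w` is new, it extends the
fan. If `w = y_(i+1)`, let `a` be missing at `x` and swap `a` and `b` on the component of `x` in the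
graph of `a`- and `b`-colored edges. That graph has maximum degree two, and `x`, `y_i`, `y_k` have
degree at most one in it, so the component of `x` misses `y_i` or `y_k`. After the swap `b` is
missing at `x` and at that vertex, and the fan up to it survives, so it can be rotated.
-/

open Finset

namespace SimpleGraph

variable {V : Type*}

section Paths

variable [Fintype V]

lemma Connected.card_filter_degree_le_one_le_two {K : SimpleGraph V} [DecidableRel K.Adj]
    (hK : K.Connected) (hdeg : ∀ v, K.degree v ≤ 2) : #{v | K.degree v ≤ 1} ≤ 2 := by
  have hsum : ∑ v, K.degree v + #{v | K.degree v ≤ 1} ≤ 2 * Fintype.card V := calc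
    _ = ∑ v, (K.degree v + if K.degree v ≤ 1 then 1 else 0) := by
      rw [card_filter, sum_add_distrib]
    _ ≤ ∑ _v : V, 2 := sum_le_sum fun v _ => by split_ifs <;> grind
    _ = 2 * Fintype.card V := by simp [mul_comm]
  have htree := hK.card_vert_le_card_edgeSet_add_one
  rw [Nat.card_eq_fintype_card, Nat.card_eq_fintype_card, ← edgeFinset_card] at htree
  have := K.sum_degrees_eq_twice_card_edges
  omega

lemma Reachable.not_reachable_of_degree_le_one {H : SimpleGraph V} [DecidableRel H.Adj]
    (hdeg : ∀ v, H.degree v ≤ 2) {x u w : V} (hxu : x ≠ u) (hxw : x ≠ w) (huw : u ≠ w)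
    (hx : H.degree x ≤ 1) (hu : H.degree u ≤ 1) (hw : H.degree w ≤ 1)
    (hreach : H.Reachable x u) : ¬ H.Reachable x w := by
  classical
  intro hreach'
  let C := H.connectedComponentMk x
  have hdegC (v : C.supp) : (H.induce C.supp).degree v = H.degree v :=
    degree_induce_of_neighborSet_subset fun w hw => C.mem_supp_of_adj_mem_supp v.2 hw
  have hxC : x ∈ C.supp := rfl
  have huC : u ∈ C.supp := ConnectedComponent.eq.mpr hreach.symm
  have hwC : w ∈ C.supp := ConnectedComponent.eq.mpr hreach'.symm
  have h3 : ({⟨x, hxC⟩, ⟨u, huC⟩, ⟨w, hwC⟩} : Finset C.supp) ⊆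
      ({v | (H.induce C.supp).degree v ≤ 1} : Finset C.supp) := by
    simp [insert_subset_iff, hdegC, hx, hu, hw]
  have hC : (H.induce C.supp).Connected := C.connected_toSimpleGraph
  have := (card_le_card h3).trans <|
    hC.card_filter_degree_le_one_le_two fun v => (hdegC v).trans_le (hdeg v)
  rw [card_insert_of_notMem (by simp [hxu, hxw]), card_pair (by simpa using huw)] at this
  omega

end Paths

variable {α : Type*} {c : Sym2 V → Option α} {G : SimpleGraph V} {x y v w : V} {a b t : α}

structure IsPartialEdgeColoring (G : SimpleGraph V) (c : Sym2 V → Option α) : Prop where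
  mem_edgeSet : ∀ ⦃e a⦄, c e = some a → e ∈ G.edgeSet
  eq_of_color_eq : ∀ ⦃v w₁ w₂ a⦄, c s(v, w₁) = some a → c s(v, w₂) = some a → w₁ = w₂

def coloredEdges (c : Sym2 V → Option α) : Set (Sym2 V) := {e | c e ≠ none}

lemma coloredEdges_update_some [DecidableEq V] (c : Sym2 V → Option α) (e : Sym2 V) (a : α) :
    coloredEdges (Function.update c e (some a)) = insert e (coloredEdges c) := by
  ext e'
  by_cases h : e' = e <;> simp [coloredEdges, h]

def IsMissing (c : Sym2 V → Option α) (v : V) (a : α) : Prop := ∀ w, c s(v, w) ≠ some a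

namespace IsPartialEdgeColoring

lemma adj (hc : G.IsPartialEdgeColoring c) (h : c s(v, w) = some a) : G.Adj v w :=
  hc.mem_edgeSet h

lemma exists_isMissing [Fintype V] [DecidableRel G.Adj] [Fintype α]
    (hc : G.IsPartialEdgeColoring c) (v : V) (h : G.degree v < Fintype.card α) :
    ∃ a, IsMissing c v a := by
  by_contra! hall
  simp only [IsMissing, not_forall, not_not] at hall
  choose f hf using hall
  have hinj : Set.InjOn f (univ : Finset α) := fun a _ b _ hab => Option.some_injective _ <| by
    rw [← hf a, ← hf b, hab]
  have := card_le_card_of_injOn f (fun a _ => (G.mem_neighborFinset v _).2 (hc.adj (hf a))) hinj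
  simp only [card_univ, card_neighborFinset_eq_degree] at this
  omega

lemma update [DecidableEq V] (hc : G.IsPartialEdgeColoring c) (hxy : G.Adj x y)
    (hx : IsMissing c x a) (hy : IsMissing c y a) :
    G.IsPartialEdgeColoring (Function.update c s(x, y) (some a)) where
  mem_edgeSet e t h := by
    by_cases he : e = s(x, y)
    · exact he ▸ hxy
    · exact hc.mem_edgeSet (by rwa [Function.update_of_ne he] at h)
  eq_of_color_eq v w₁ w₂ t h₁ h₂ := by
    have one_side {w w'} (e : s(v, w) = s(x, y)) (e' : s(v, w') ≠ s(x, y))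
        (h : Function.update c s(x, y) (some a) s(v, w) = some t)
        (h' : Function.update c s(x, y) (some a) s(v, w') = some t) : False := by
      rw [e, Function.update_self] at h
      rw [Function.update_of_ne e', ← h] at h'
      obtain rfl | rfl := Sym2.mem_iff.mp (e ▸ Sym2.mem_mk_left v w)
      exacts [hx _ h', hy _ h']
    by_cases e₁ : s(v, w₁) = s(x, y) <;> by_cases e₂ : s(v, w₂) = s(x, y)
    · exact Sym2.congr_right.mp (e₁.trans e₂.symm)
    · exact (one_side e₁ e₂ h₁ h₂).elim
    · exact (one_side e₂ e₁ h₂ h₁).elim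
    · rw [Function.update_of_ne e₁] at h₁
      rw [Function.update_of_ne e₂] at h₂
      exact hc.eq_of_color_eq h₁ h₂

end IsPartialEdgeColoring

section Kempe

def kempeGraph (c : Sym2 V → Option α) (a b : α) : SimpleGraph V :=
  fromEdgeSet {e | c e = some a ∨ c e = some b}

lemma kempeGraph_adj :
    (kempeGraph c a b).Adj v w ↔ (c s(v, w) = some a ∨ c s(v, w) = some b) ∧ v ≠ w :=
  fromEdgeSet_adj _

lemma IsPartialEdgeColoring.degree_kempeGraph_le_card (hc : G.IsPartialEdgeColoring c) (v : V)
    [Fintype ((kempeGraph c a b).neighborSet v)] (s : Finset α)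
    (hs : ∀ w t, c s(v, w) = some t → t = a ∨ t = b → t ∈ s) :
    (kempeGraph c a b).degree v ≤ #s := by
  rw [← card_neighborFinset_eq_degree]
  refine (card_le_card_of_injOn (t := s.map .some) (fun w => c s(v, w)) (fun w hw => ?_)
    (fun w₁ hw₁ w₂ _ h => ?_)).trans (card_map _).le
  · obtain ⟨hab, -⟩ := kempeGraph_adj.1 ((mem_neighborFinset _ _ _).1 hw)
    obtain ⟨t, ht⟩ : ∃ t, c s(v, w) = some t ∧ (t = a ∨ t = b) := by
      rcases hab with h | h <;> exact ⟨_, h, by simp⟩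
    simpa [ht.1] using hs w t ht.1 ht.2
  · obtain ⟨hab, -⟩ := kempeGraph_adj.1 ((mem_neighborFinset _ _ _).1 hw₁)
    obtain ⟨t, ht⟩ : ∃ t, c s(v, w₁) = some t := by rcases hab with h | h <;> exact ⟨_, h⟩
    exact hc.eq_of_color_eq ht (h.symm.trans ht)

lemma IsPartialEdgeColoring.degree_kempeGraph_le_one (hc : G.IsPartialEdgeColoring c) {v : V}
    [Fintype ((kempeGraph c a b).neighborSet v)] (hv : IsMissing c v a ∨ IsMissing c v b) :
    (kempeGraph c a b).degree v ≤ 1 := by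
  rcases hv with hv | hv
  · refine (hc.degree_kempeGraph_le_card v {b} fun w t h ht => ?_).trans (card_singleton _).le
    rcases ht with rfl | rfl
    exacts [(hv w h).elim, mem_singleton_self t]
  · refine (hc.degree_kempeGraph_le_card v {a} fun w t h ht => ?_).trans (card_singleton _).le
    rcases ht with rfl | rfl
    exacts [mem_singleton_self t, (hv w h).elim]

variable [DecidableEq α]

lemma IsPartialEdgeColoring.degree_kempeGraph_le_two (hc : G.IsPartialEdgeColoring c) (v : V)
    [Fintype ((kempeGraph c a b).neighborSet v)] : (kempeGraph c a b).degree v ≤ 2 :=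
  (hc.degree_kempeGraph_le_card v {a, b} fun _ _ _ h => by simpa using h).trans card_le_two

open Classical in
noncomputable def kempeSwap (c : Sym2 V → Option α) (a b : α) (x : V) : Sym2 V → Option α :=
  fun e => if ∃ v ∈ e, (kempeGraph c a b).Reachable x v then (c e).map (Equiv.swap a b) else c e

lemma kempeSwap_of_reachable (hv : (kempeGraph c a b).Reachable x v) (w : V) :
    kempeSwap c a b x s(v, w) = (c s(v, w)).map (Equiv.swap a b) :=
  if_pos ⟨v, Sym2.mem_mk_left v w, hv⟩

lemma kempeSwap_of_not_reachable (hv : ¬ (kempeGraph c a b).Reachable x v) (w : V) :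
    kempeSwap c a b x s(v, w) = c s(v, w) := by
  unfold kempeSwap
  split_ifs with h
  · obtain ⟨u, hu, hxu⟩ := h
    have hw : (kempeGraph c a b).Reachable x w := by
      rcases Sym2.mem_iff.mp hu with rfl | rfl
      exacts [(hv hxu).elim, hxu]
    have hvw : w ≠ v := by rintro rfl; exact hv hw
    rcases hcv : c s(v, w) with _ | t
    · rfl
    · have hab : ¬ (t = a ∨ t = b) := fun h => hv <| hw.trans <| Adj.reachable <|
        kempeGraph_adj.2 ⟨by simpa [Sym2.eq_swap, hcv, eq_comm] using h, hvw⟩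
      rw [not_or] at hab
      simp [Equiv.swap_apply_of_ne_of_ne hab.1 hab.2]
  · rfl

lemma kempeSwap_eq_none_iff {e : Sym2 V} : kempeSwap c a b x e = none ↔ c e = none := by
  unfold kempeSwap
  split_ifs <;> simp

lemma coloredEdges_kempeSwap : coloredEdges (kempeSwap c a b x) = coloredEdges c :=
  Set.ext fun _ => kempeSwap_eq_none_iff.not

lemma kempeSwap_eq_some_iff_of_ne (ha : t ≠ a) (hb : t ≠ b) {e : Sym2 V} :
    kempeSwap c a b x e = some t ↔ c e = some t := by
  unfold kempeSwap
  split_ifs <;> simp [Option.map_eq_some_iff, Equiv.swap_apply_eq_iff,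
    Equiv.swap_apply_of_ne_of_ne ha hb]

lemma isMissing_kempeSwap_iff_of_reachable (hv : (kempeGraph c a b).Reachable x v) :
    IsMissing (kempeSwap c a b x) v t ↔ IsMissing c v (Equiv.swap a b t) := by
  simp [IsMissing, kempeSwap_of_reachable hv, Option.map_eq_some_iff, Equiv.swap_apply_eq_iff]

lemma isMissing_kempeSwap_iff_of_not_reachable (hv : ¬ (kempeGraph c a b).Reachable x v) :
    IsMissing (kempeSwap c a b x) v t ↔ IsMissing c v t := by
  simp [IsMissing, kempeSwap_of_not_reachable hv]

lemma isMissing_kempeSwap_iff_of_ne (ha : t ≠ a) (hb : t ≠ b) :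
    IsMissing (kempeSwap c a b x) v t ↔ IsMissing c v t := by
  simp [IsMissing, kempeSwap_eq_some_iff_of_ne ha hb]

lemma IsPartialEdgeColoring.kempeSwap (hc : G.IsPartialEdgeColoring c) (a b : α) (x : V) :
    G.IsPartialEdgeColoring (kempeSwap c a b x) where
  mem_edgeSet e t h := by
    obtain ⟨u, hu⟩ := Option.ne_none_iff_exists'.mp
      (kempeSwap_eq_none_iff.not.mp (h ▸ Option.some_ne_none t))
    exact hc.mem_edgeSet hu
  eq_of_color_eq v w₁ w₂ t h₁ h₂ := by
    by_cases hv : (kempeGraph c a b).Reachable x v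
    · rw [kempeSwap_of_reachable hv] at h₁ h₂
      obtain ⟨t₁, e₁, rfl⟩ := Option.map_eq_some_iff.mp h₁
      obtain ⟨t₂, e₂, ht⟩ := Option.map_eq_some_iff.mp h₂
      exact hc.eq_of_color_eq e₁ ((Equiv.injective _ ht) ▸ e₂)
    · rw [kempeSwap_of_not_reachable hv] at h₁ h₂
      exact hc.eq_of_color_eq h₁ h₂

end Kempe

structure IsFan (G : SimpleGraph V) (c : Sym2 V → Option α) (x : V) (y : ℕ → V) (k : ℕ) :
    Prop where
  injOn : Set.InjOn y (Set.Iic k)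
  adj : ∀ i ≤ k, G.Adj x (y i)
  uncolored : c s(x, y 0) = none
  link : ∀ i < k, ∃ t, c s(x, y (i + 1)) = some t ∧ IsMissing c (y i) t

lemma isFan_const (hxy : G.Adj x y) (h : c s(x, y) = none) : G.IsFan c x (fun _ => y) 0 where
  injOn _ hi _ hj _ := (Nat.le_zero.mp hi).trans (Nat.le_zero.mp hj).symm
  adj _ _ := hxy
  uncolored := h
  link _ hi := absurd hi (Nat.not_lt_zero _)

namespace IsFan

variable {y : ℕ → V} {k : ℕ}

lemma ne_center (hF : G.IsFan c x y k) {i : ℕ} (hi : i ≤ k) : y i ≠ x := (hF.adj i hi).ne'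

lemma mk_ne_mk (hF : G.IsFan c x y k) {i j : ℕ} (hi : i ≤ k) (hj : j ≤ k) (hij : i ≠ j) (w : V) :
    s(y i, w) ≠ s(x, y j) := fun h => by
  rcases Sym2.mem_iff.mp (h ▸ Sym2.mem_mk_left (y i) w) with h' | h'
  exacts [hF.ne_center hi h', hij (hF.injOn hi hj h')]

lemma lt_card [Fintype V] (hF : G.IsFan c x y k) : k < Fintype.card V := by
  have := card_le_card_of_injOn y (s := range (k + 1)) (t := univ) (fun _ _ => mem_univ _)
    fun i hi j hj h => hF.injOn (by simpa [Nat.lt_succ_iff] using hi)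
      (by simpa [Nat.lt_succ_iff] using hj) h
  simpa [Nat.lt_succ_iff] using this

lemma mono (hF : G.IsFan c x y k) {j : ℕ} (hj : j ≤ k) : G.IsFan c x y j where
  injOn := hF.injOn.mono (Set.Iic_subset_Iic.mpr hj)
  adj i hi := hF.adj i (hi.trans hj)
  uncolored := hF.uncolored
  link i hi := hF.link i (hi.trans_le hj)

lemma congr {c' : Sym2 V → Option α} (hF : G.IsFan c x y k)
    (h : ∀ i ≤ k, ∀ w, c' s(y i, w) = c s(y i, w)) : G.IsFan c' x y k where
  injOn := hF.injOn
  adj := hF.adj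
  uncolored := by rw [Sym2.eq_swap, h 0 (Nat.zero_le _), Sym2.eq_swap]; exact hF.uncolored
  link i hi := by
    obtain ⟨t, ht, hmiss⟩ := hF.link i hi
    refine ⟨t, ?_, fun w => ?_⟩
    · rw [Sym2.eq_swap, h (i + 1) hi, Sym2.eq_swap]; exact ht
    · rw [h i hi.le]; exact hmiss w

lemma snoc (hF : G.IsFan c x y k) (hc : G.IsPartialEdgeColoring c) (hw : c s(x, w) = some b)
    (hb : IsMissing c (y k) b) (hnew : ∀ i ≤ k, y i ≠ w) :
    G.IsFan c x (Function.update y (k + 1) w) (k + 1) := by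
  have hy : ∀ i ≤ k, Function.update y (k + 1) w i = y i := fun i hi =>
    Function.update_of_ne (by omega) _ _
  refine ⟨fun i hi j hj h => ?_, fun i hi => ?_, ?_, fun i hi => ?_⟩
  · simp only [Set.mem_Iic] at hi hj
    rcases hi.lt_or_eq with hi | rfl <;> rcases hj.lt_or_eq with hj | rfl
    · rw [hy i (by omega), hy j (by omega)] at h
      exact hF.injOn (Nat.lt_succ_iff.mp hi) (Nat.lt_succ_iff.mp hj) h
    · rw [hy i (by omega), Function.update_self] at h
      exact absurd h (hnew i (by omega))
    · rw [hy j (by omega), Function.update_self] at h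
      exact absurd h.symm (hnew j (by omega))
    · rfl
  · rcases hi.lt_or_eq with hi | rfl
    · rw [hy i (by omega)]; exact hF.adj i (by omega)
    · rw [Function.update_self]; exact hc.adj hw
  · rw [hy 0 (Nat.zero_le _)]; exact hF.uncolored
  · rcases (Nat.lt_succ_iff.mp hi).lt_or_eq with hi | rfl
    · rw [hy i hi.le, hy (i + 1) hi]; exact hF.link i hi
    · rw [hy i le_rfl, Function.update_self]; exact ⟨b, hw, hb⟩

theorem rotate [DecidableEq V] (hc : G.IsPartialEdgeColoring c) (hF : G.IsFan c x y k)
    (hx : IsMissing c x b) (hy : IsMissing c (y k) b) :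
    ∃ c' : Sym2 V → Option α,
      G.IsPartialEdgeColoring c' ∧ insert s(x, y 0) (coloredEdges c) ⊆ coloredEdges c' := by
  induction k generalizing c b with
  | zero => exact ⟨_, hc.update (hF.adj 0 le_rfl) hx hy, (coloredEdges_update_some ..).ge⟩
  | succ k ih =>
    obtain ⟨t, ht, hyt⟩ := hF.link k k.lt_succ_self
    have hagree (i : ℕ) (hi : i ≤ k) (w : V) :
        Function.update c s(x, y (k + 1)) (some b) s(y i, w) = c s(y i, w) :=
      Function.update_of_ne (hF.mk_ne_mk (hi.trans k.le_succ) le_rfl (by omega) w) _ _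
    have hxt : IsMissing (Function.update c s(x, y (k + 1)) (some b)) x t := fun w hw => by
      by_cases he : s(x, w) = s(x, y (k + 1))
      · rw [he, Function.update_self] at hw
        exact hx _ (Option.some_inj.mp hw ▸ ht)
      · rw [Function.update_of_ne he] at hw
        exact he (by rw [hc.eq_of_color_eq hw ht])
    obtain ⟨c', hc', hsub⟩ := ih (hc.update (hF.adj _ le_rfl) hx hy)
      ((hF.mono k.le_succ).congr hagree) hxt (fun w => hagree k le_rfl w ▸ hyt w)
    refine ⟨c', hc', Set.Subset.trans ?_ hsub⟩
    rw [coloredEdges_update_some]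
    exact Set.insert_subset_insert (Set.subset_insert _ _)

lemma kempeSwap [DecidableEq α] (hF : G.IsFan c x y k) (hx : IsMissing c x a)
    (hb : ∀ i < k, c s(x, y (i + 1)) = some b → (kempeGraph c a b).Reachable x (y i)) :
    G.IsFan (kempeSwap c a b x) x y k where
  injOn := hF.injOn
  adj := hF.adj
  uncolored := kempeSwap_eq_none_iff.mpr hF.uncolored
  link i hi := by
    obtain ⟨t, ht, hyt⟩ := hF.link i hi
    have hta : t ≠ a := fun h => hx _ (h ▸ ht)
    by_cases htb : t = b
    · subst htb
      refine ⟨a, by simp [kempeSwap_of_reachable (Reachable.refl x), ht], ?_⟩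
      rw [isMissing_kempeSwap_iff_of_reachable (hb i hi ht), Equiv.swap_apply_left]
      exact hyt
    · exact ⟨t, (kempeSwap_eq_some_iff_of_ne hta htb).mpr ht,
        (isMissing_kempeSwap_iff_of_ne hta htb).mpr hyt⟩

theorem exists_extend_of_eq_some [Fintype V] [DecidableEq V] [DecidableEq α]
    (hc : G.IsPartialEdgeColoring c) (hF : G.IsFan c x y k) (hxa : IsMissing c x a)
    (hyb : IsMissing c (y k) b) {i : ℕ} (hi : i < k) (hb : c s(x, y (i + 1)) = some b) :
    ∃ c' : Sym2 V → Option α,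
      G.IsPartialEdgeColoring c' ∧ insert s(x, y 0) (coloredEdges c) ⊆ coloredEdges c' := by
  classical
  obtain ⟨t, ht, hzb⟩ := hF.link i hi
  rw [Option.some_inj.mp (ht.symm.trans hb)] at hzb
  have hlink (j : ℕ) (hj : j < k) (h : c s(x, y (j + 1)) = some b) : j = i :=
    Nat.succ_injective (hF.injOn hj hi (hc.eq_of_color_eq h hb))
  have hxb : IsMissing (SimpleGraph.kempeSwap c a b x) x b := by
    rw [isMissing_kempeSwap_iff_of_reachable (Reachable.refl x), Equiv.swap_apply_right]
    exact hxa
  rw [← coloredEdges_kempeSwap (a := a) (b := b) (x := x)]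
  by_cases hz : (kempeGraph c a b).Reachable x (y i)
  · have hlast : ¬ (kempeGraph c a b).Reachable x (y k) :=
      hz.not_reachable_of_degree_le_one (fun v => hc.degree_kempeGraph_le_two v)
        (hF.ne_center hi.le).symm (hF.ne_center le_rfl).symm
        (fun h => hi.ne (hF.injOn hi.le (le_refl k) h)) (hc.degree_kempeGraph_le_one (.inl hxa))
        (hc.degree_kempeGraph_le_one (.inr hzb)) (hc.degree_kempeGraph_le_one (.inr hyb))
    have hF' := hF.kempeSwap hxa fun j hj h => hlink j hj h ▸ hz
    exact hF'.rotate (hc.kempeSwap a b x) hxb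
      ((isMissing_kempeSwap_iff_of_not_reachable hlast).mpr hyb)
  · have hF' := (hF.mono hi.le).kempeSwap hxa fun j hj h => absurd (hlink j (hj.trans hi) h) hj.ne
    exact hF'.rotate (hc.kempeSwap a b x) hxb
      ((isMissing_kempeSwap_iff_of_not_reachable hz).mpr hzb)

theorem exists_extend [Fintype V] [DecidableEq V] [DecidableRel G.Adj] [Fintype α]
    [DecidableEq α] (hα : ∀ v, G.degree v < Fintype.card α) (hc : G.IsPartialEdgeColoring c)
    {y : ℕ → V} {k : ℕ} (hF : G.IsFan c x y k) :
    ∃ c' : Sym2 V → Option α,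
      G.IsPartialEdgeColoring c' ∧ insert s(x, y 0) (coloredEdges c) ⊆ coloredEdges c' := by
  obtain ⟨b, hyb⟩ := hc.exists_isMissing (y k) (hα _)
  by_cases hxb : IsMissing c x b
  · exact hF.rotate hc hxb hyb
  obtain ⟨w, hw⟩ : ∃ w, c s(x, w) = some b := by simpa [IsMissing] using hxb
  by_cases hwF : ∃ j ≤ k, y j = w
  · obtain ⟨j, hj, rfl⟩ := hwF
    obtain ⟨a, hxa⟩ := hc.exists_isMissing x (hα x)
    cases j with
    | zero => simp [hF.uncolored] at hw
    | succ i => exact hF.exists_extend_of_eq_some hc hxa hyb hj hw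
  · simp only [not_exists, not_and] at hwF
    have := hF.lt_card
    simpa using (hF.snoc hc hw hyb hwF).exists_extend hα hc
termination_by Fintype.card V - k

end IsFan

lemma IsPartialEdgeColoring.exists_extend [Fintype V] [DecidableEq V] [DecidableRel G.Adj]
    [Fintype α] [DecidableEq α] (hα : ∀ v, G.degree v < Fintype.card α)
    (hc : G.IsPartialEdgeColoring c) {e : Sym2 V} (he : e ∈ G.edgeSet) :
    ∃ c' : Sym2 V → Option α,
      G.IsPartialEdgeColoring c' ∧ insert e (coloredEdges c) ⊆ coloredEdges c' := by
  induction e using Sym2.ind with | _ x y =>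
  by_cases h : c s(x, y) = none
  · exact (isFan_const he h).exists_extend hα hc
  · exact ⟨c, hc, Set.insert_subset h subset_rfl⟩

theorem exists_isPartialEdgeColoring [Fintype V] [DecidableEq V] [DecidableRel G.Adj]
    [Fintype α] [DecidableEq α] (hα : ∀ v, G.degree v < Fintype.card α) :
    ∃ c : Sym2 V → Option α, G.IsPartialEdgeColoring c ∧ G.edgeSet ⊆ coloredEdges c := by
  suffices ∀ s : Finset (Sym2 V), ↑s ⊆ G.edgeSet →
      ∃ c : Sym2 V → Option α, G.IsPartialEdgeColoring c ∧ ↑s ⊆ coloredEdges c by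
    simpa using this G.edgeFinset (by simp)
  intro s
  induction s using Finset.induction_on with
  | empty =>
    exact fun _ => ⟨fun _ => none,
      ⟨fun _ _ h => by simp at h, fun _ _ _ _ h => by simp at h⟩, by simp⟩
  | insert e s _ ih =>
    intro hs
    rw [coe_insert, Set.insert_subset_iff] at hs
    obtain ⟨c, hc, hsc⟩ := ih hs.2
    obtain ⟨c', hc', hsub⟩ := hc.exists_extend hα hs.1
    exact ⟨c', hc', by rw [coe_insert]; exact (Set.insert_subset_insert hsc).trans hsub⟩

end SimpleGraph

/-- Vizing's theorem: every finite simple undirected graph with maximum degree `Δ`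
admits a proper edge coloring using at most `Δ+1` colors. -/
theorem vizing {V : Type*} [Fintype V] [DecidableEq V]
    (G : SimpleGraph V) [DecidableRel G.Adj] (Δ : ℕ)
    (hΔ : ∀ v, G.degree v ≤ Δ) :
    ∃ χ : Sym2 V → Fin (Δ + 1),
      ∀ e₁ ∈ G.edgeSet, ∀ e₂ ∈ G.edgeSet, e₁ ≠ e₂ → (∃ v, v ∈ e₁ ∧ v ∈ e₂) →
        χ e₁ ≠ χ e₂ := by
  obtain ⟨c, hc, hall⟩ := G.exists_isPartialEdgeColoring (α := Fin (Δ + 1))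
    fun v => by simpa [Nat.lt_succ_iff] using hΔ v
  refine ⟨fun e => (c e).getD 0, ?_⟩
  rintro e₁ he₁ e₂ he₂ hne ⟨v, hv₁, hv₂⟩ heq
  obtain ⟨w₁, rfl⟩ := Sym2.mem_iff_exists.mp hv₁
  obtain ⟨w₂, rfl⟩ := Sym2.mem_iff_exists.mp hv₂
  obtain ⟨t₁, h₁⟩ := Option.ne_none_iff_exists'.mp (hall he₁)
  obtain ⟨t₂, h₂⟩ := Option.ne_none_iff_exists'.mp (hall he₂)
  simp only [h₁, h₂, Option.getD_some] at heq
  exact hne (by rw [hc.eq_of_color_eq h₁ (heq ▸ h₂)])
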